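/- (Infeasibility detection, dual case) Under the stated proximal-iterate hypotheses, if δz ≠ 0 then the dual QP is infeasible: there is no triple (u, λ, v) ∈ ℝⁿ × ℝᵐ × ℝ^q with Hu + f + Gᵀλ + Aᵀv = 0 and v ≥ 0. Moreover δz is a certificate of dual infeasibility, i.e., H·δz = 0, A·δz ≤ 0, G·δz = 0, and fᵀδz < 0. -/

import Mathlib

/-!
Everything is read off the increments `z (k + 1) - z k → δz`, `lam (k + 1) - lam k → δlam`,
`v (k + 1) - v k → δv`. Differencing the multiplier step for `Gz = h` gives `G δz = 0`. The slack
`s_k = b - A z_{k+1} + σ (v_{k+1} - v_k) ≥ 0` has increments tending to `-A δz`, so `A δz ≤ 0`,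
and wherever `(A δz)_i < 0` the slack diverges, so complementarity forces `v_{k+1,i} = 0` for
large `k`. Pairing the stationarity equation with `δz` then gives, for large `k`,
`⟪z_{k+1}, H δz⟫ + ⟪f, δz⟫ + σ ⟪z_{k+1} - z_k, δz⟫ = 0`. The first term grows like
`k ⟪δz, H δz⟫` while the others stay bounded, so `⟪δz, H δz⟫ = 0`, i.e. `H δz = 0`, and the limit
leaves `⟪f, δz⟫ = -σ ‖δz‖² < 0`. Weak duality turns such a `δz` into a proof of dual infeasibility.
-/

open Matrix Filter Topology

theorem tendsto_succ_sub_nhds_zero {E : Type*} [TopologicalSpace E] [AddCommGroup E]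
    [IsTopologicalAddGroup E] {u : ℕ → E} {L : E} (hu : Tendsto u atTop (𝓝 L)) :
    Tendsto (fun k => u (k + 1) - u k) atTop (𝓝 0) := by
  simpa using (hu.comp (tendsto_add_atTop_nat 1)).sub hu

theorem Filter.Tendsto.dotProduct_const {α ι R : Type*} [Fintype ι] [TopologicalSpace R]
    [NonUnitalNonAssocSemiring R] [IsTopologicalSemiring R] {l : Filter α} {u : α → ι → R}
    {a : ι → R} (hu : Tendsto u l (𝓝 a)) (y : ι → R) :
    Tendsto (fun k => u k ⬝ᵥ y) l (𝓝 (a ⬝ᵥ y)) :=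
  ((continuous_id.dotProduct continuous_const).tendsto a).comp hu

theorem Filter.Tendsto.const_mulVec {α ι κ R : Type*} [Fintype κ] [TopologicalSpace R]
    [NonUnitalNonAssocSemiring R] [IsTopologicalSemiring R] {l : Filter α} {u : α → κ → R}
    {a : κ → R} (M : Matrix ι κ R) (hu : Tendsto u l (𝓝 a)) :
    Tendsto (fun k => M *ᵥ u k) l (𝓝 (M *ᵥ a)) :=
  ((continuous_const.matrix_mulVec continuous_id).tendsto a).comp hu

theorem tendsto_atTop_of_tendsto_succ_sub {u : ℕ → ℝ} {c : ℝ}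
    (hu : Tendsto (fun k => u (k + 1) - u k) atTop (𝓝 c)) (hc : 0 < c) :
    Tendsto u atTop atTop := by
  obtain ⟨N, hN⟩ := eventually_atTop.1 (hu.eventually (lt_mem_nhds (half_lt_self hc)))
  have linear_growth : ∀ j : ℕ, u N + j * (c / 2) ≤ u (j + N) := by
    intro j
    induction j with
    | zero => simp
    | succ j ih =>
      have := hN (j + N) (Nat.le_add_left N j)
      rw [Nat.add_right_comm]
      push_cast
      linarith
  rw [← tendsto_add_atTop_iff_nat N]
  exact tendsto_atTop_mono linear_growth <| tendsto_atTop_add_const_left _ _ <|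
    tendsto_natCast_atTop_atTop.atTop_mul_const (half_pos hc)

theorem nonneg_of_tendsto_succ_sub {u : ℕ → ℝ} {c : ℝ}
    (hu : Tendsto (fun k => u (k + 1) - u k) atTop (𝓝 c)) (h : ∀ᶠ k in atTop, 0 ≤ u k) :
    0 ≤ c := by
  by_contra! hc
  have hneg : Tendsto (fun k => -u (k + 1) - -u k) atTop (𝓝 (-c)) := by
    simpa only [neg_sub_neg, neg_sub] using hu.neg
  have hdiv := tendsto_atTop_of_tendsto_succ_sub (u := fun k => -u k) hneg (neg_pos.2 hc)
  obtain ⟨k, hk, hk'⟩ := (h.and (hdiv.eventually_gt_atTop 0)).exists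
  exact (neg_pos.1 hk').not_ge hk

section Complementarity

variable {ι : Type*} {s w : ℕ → ι → ℝ} {d : ι → ℝ}

theorem pi_nonneg_of_tendsto_succ_sub (hs : ∀ k, 0 ≤ s k)
    (hd : Tendsto (fun k => s (k + 1) - s k) atTop (𝓝 d)) : 0 ≤ d := fun i =>
  nonneg_of_tendsto_succ_sub (u := fun k => s k i) (tendsto_pi_nhds.1 hd i)
    (Eventually.of_forall fun k => hs k i)

theorem eventually_dotProduct_eq_zero_of_complementary [Fintype ι] (hs : ∀ k, 0 ≤ s k)
    (hw : ∀ k, 0 ≤ w k) (hsw : ∀ k, s k ⬝ᵥ w k = 0)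
    (hd : Tendsto (fun k => s (k + 1) - s k) atTop (𝓝 d)) :
    ∀ᶠ k in atTop, w k ⬝ᵥ d = 0 := by
  have hcompl : ∀ k i, s k i * w k i = 0 := fun k i =>
    (Finset.sum_eq_zero_iff_of_nonneg fun j _ => mul_nonneg (hs k j) (hw k j)).1 (hsw k) i
      (Finset.mem_univ i)
  have hterm : ∀ i, ∀ᶠ k in atTop, w k i * d i = 0 := by
    intro i
    rcases (pi_nonneg_of_tendsto_succ_sub hs hd i).eq_or_lt with hdi | hdi
    · exact Eventually.of_forall fun k => by rw [← hdi, Pi.zero_apply, mul_zero]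
    · have hdiv := tendsto_atTop_of_tendsto_succ_sub (u := fun k => s k i)
        (tendsto_pi_nhds.1 hd i) hdi
      filter_upwards [hdiv.eventually_gt_atTop 0] with k hk
      rw [(mul_eq_zero.1 (hcompl k i)).resolve_left hk.ne', zero_mul]
  filter_upwards [eventually_all.2 hterm] with k hk
  exact Finset.sum_eq_zero fun i _ => hk i

end Complementarity

section QuadraticProgram

variable {n m q : Type*} [Fintype n]
  (H : Matrix n n ℝ) (f : n → ℝ) (G : Matrix m n ℝ) (A : Matrix q n ℝ)

def dualResidual [Fintype m] [Fintype q] (u : n → ℝ) (lam : m → ℝ) (w : q → ℝ) : n → ℝ :=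
  H *ᵥ u + f + Gᵀ *ᵥ lam + Aᵀ *ᵥ w

def IsDualInfeasibilityCertificate (d : n → ℝ) : Prop :=
  H *ᵥ d = 0 ∧ A *ᵥ d ≤ 0 ∧ G *ᵥ d = 0 ∧ f ⬝ᵥ d < 0

variable {H f G A}

theorem dualResidual_dotProduct [Fintype m] [Fintype q] (u : n → ℝ) (lam : m → ℝ) (w : q → ℝ)
    (d : n → ℝ) :
    dualResidual H f G A u lam w ⬝ᵥ d =
      u ⬝ᵥ Hᵀ *ᵥ d + f ⬝ᵥ d + lam ⬝ᵥ G *ᵥ d + w ⬝ᵥ A *ᵥ d := by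
  rw [dualResidual, dotProduct_comm, dotProduct_comm f]
  simp only [dotProduct_add, dotProduct_transpose_mulVec]

theorem IsDualInfeasibilityCertificate.not_exists_dualResidual_eq_zero [Fintype m] [Fintype q]
    {d : n → ℝ} (hd : IsDualInfeasibilityCertificate H f G A d) (hH : Hᵀ = H) :
    ¬ ∃ (u : n → ℝ) (lam : m → ℝ) (w : q → ℝ), dualResidual H f G A u lam w = 0 ∧ 0 ≤ w := by
  obtain ⟨hHd, hAd, hGd, hfd⟩ := hd
  rintro ⟨u, lam, w, hres, hw⟩
  have hpair : dualResidual H f G A u lam w ⬝ᵥ d = 0 := by rw [hres, zero_dotProduct]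
  rw [dualResidual_dotProduct, hH, hHd, hGd, dotProduct_zero, dotProduct_zero] at hpair
  have : w ⬝ᵥ A *ᵥ d ≤ 0 := by
    simpa using dotProduct_le_dotProduct_of_nonneg_left hAd hw
  linarith

variable {h : m → ℝ} {b : q → ℝ} {σ : ℝ} {z : ℕ → n → ℝ} {lam : ℕ → m → ℝ} {v : ℕ → q → ℝ}
  {δz : n → ℝ} {δlam : m → ℝ} {δv : q → ℝ}

theorem mulVec_eq_zero_of_prox_multiplier_step
    (hstep : ∀ k : ℕ, h - G *ᵥ z (k + 1) + σ • (lam (k + 1) - lam k) = 0)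
    (hd1 : Tendsto (fun k => z (k + 1) - z k) atTop (𝓝 δz))
    (hd2 : Tendsto (fun k => lam (k + 1) - lam k) atTop (𝓝 δlam)) :
    G *ᵥ δz = 0 := by
  have hdiff : ∀ k, G *ᵥ (z (k + 2) - z (k + 1)) =
      σ • ((lam (k + 2) - lam (k + 1)) - (lam (k + 1) - lam k)) := by
    intro k
    rw [mulVec_sub]
    linear_combination (norm := module) hstep k - hstep (k + 1)
  have hlhs := (hd1.comp (tendsto_add_atTop_nat 1)).const_mulVec G
  have hrhs := (tendsto_succ_sub_nhds_zero hd2).const_smul σ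
  rw [smul_zero] at hrhs
  exact tendsto_nhds_unique (hlhs.congr hdiff) hrhs

theorem tendsto_prox_slack_succ_sub
    (hd1 : Tendsto (fun k => z (k + 1) - z k) atTop (𝓝 δz))
    (hd3 : Tendsto (fun k => v (k + 1) - v k) atTop (𝓝 δv)) :
    Tendsto (fun k => (b - A *ᵥ z (k + 2) + σ • (v (k + 2) - v (k + 1))) -
      (b - A *ᵥ z (k + 1) + σ • (v (k + 1) - v k))) atTop (𝓝 (-(A *ᵥ δz))) := by
  have hA := (hd1.comp (tendsto_add_atTop_nat 1)).const_mulVec A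
  have hv := (tendsto_succ_sub_nhds_zero hd3).const_smul σ
  convert hA.neg.add hv using 1
  · ext1 k
    simp only [Function.comp_apply, mulVec_sub]
    module
  · rw [smul_zero, add_zero]

theorem eventually_prox_pairing_eq_zero [Fintype m] [Fintype q] (hH : Hᵀ = H)
    (hstat : ∀ k : ℕ, dualResidual H f G A (z (k + 1)) (lam (k + 1)) (v (k + 1)) +
      σ • (z (k + 1) - z k) = 0)
    (hG : G *ᵥ δz = 0) (hAv : ∀ᶠ k in atTop, v (k + 1) ⬝ᵥ A *ᵥ δz = 0) :
    ∀ᶠ k in atTop, z (k + 1) ⬝ᵥ H *ᵥ δz + f ⬝ᵥ δz + σ * ((z (k + 1) - z k) ⬝ᵥ δz) = 0 := by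
  filter_upwards [hAv] with k hk
  have hpair : (dualResidual H f G A (z (k + 1)) (lam (k + 1)) (v (k + 1)) +
      σ • (z (k + 1) - z k)) ⬝ᵥ δz = 0 := by rw [hstat k, zero_dotProduct]
  rwa [add_dotProduct, dualResidual_dotProduct, hH, hG, hk, dotProduct_zero, add_zero, add_zero,
    smul_dotProduct, smul_eq_mul] at hpair

theorem dotProduct_eq_zero_of_eventually_pairing_eq_zero {w : n → ℝ} {c : ℝ}
    (hd1 : Tendsto (fun k => z (k + 1) - z k) atTop (𝓝 δz))
    (he : ∀ᶠ k in atTop, z (k + 1) ⬝ᵥ w + c + σ * ((z (k + 1) - z k) ⬝ᵥ δz) = 0) :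
    δz ⬝ᵥ w = 0 := by
  set e : ℕ → ℝ := fun k => z (k + 1) ⬝ᵥ w + c + σ * ((z (k + 1) - z k) ⬝ᵥ δz)
  have hzero : Tendsto (fun k => e (k + 1) - e k) atTop (𝓝 0) :=
    tendsto_succ_sub_nhds_zero (tendsto_const_nhds.congr' (EventuallyEq.symm he))
  have hlim : Tendsto (fun k => e (k + 1) - e k) atTop (𝓝 (δz ⬝ᵥ w)) := by
    have := ((hd1.comp (tendsto_add_atTop_nat 1)).dotProduct_const w).add
      (((tendsto_succ_sub_nhds_zero hd1).dotProduct_const δz).const_mul σ)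
    convert this using 1
    · ext1 k
      simp only [e, Function.comp_apply, sub_dotProduct]
      ring
    · simp
  exact tendsto_nhds_unique hlim hzero

theorem eq_neg_mul_dotProduct_self_of_eventually_pairing_eq_zero {c : ℝ}
    (hd1 : Tendsto (fun k => z (k + 1) - z k) atTop (𝓝 δz))
    (he : ∀ᶠ k in atTop, c + σ * ((z (k + 1) - z k) ⬝ᵥ δz) = 0) :
    c = -(σ * (δz ⬝ᵥ δz)) := by
  have hlim : Tendsto (fun k => c + σ * ((z (k + 1) - z k) ⬝ᵥ δz)) atTop
      (𝓝 (c + σ * (δz ⬝ᵥ δz))) :=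
    tendsto_const_nhds.add ((hd1.dotProduct_const δz).const_mul σ)
  linarith [tendsto_nhds_unique_of_eventuallyEq hlim tendsto_const_nhds he]

end QuadraticProgram

theorem prox_dual_infeasibility_detection_general (n m q : ℕ)
    (H : Matrix (Fin n) (Fin n) ℝ) (hH : H.PosSemidef)
    (f : Fin n → ℝ) (G : Matrix (Fin m) (Fin n) ℝ) (h : Fin m → ℝ)
    (A : Matrix (Fin q) (Fin n) ℝ) (b : Fin q → ℝ)
    (σ : ℝ) (hσ : 0 < σ)
    (z : ℕ → Fin n → ℝ) (lam : ℕ → Fin m → ℝ) (v : ℕ → Fin q → ℝ)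
    (heq1 : ∀ k : ℕ, H.mulVec (z (k + 1)) + f + Gᵀ.mulVec (lam (k + 1)) +
      Aᵀ.mulVec (v (k + 1)) + σ • (z (k + 1) - z k) = 0)
    (heq2 : ∀ k : ℕ, h - G.mulVec (z (k + 1)) + σ • (lam (k + 1) - lam k) = 0)
    (heq3 : ∀ k : ℕ, (b - A.mulVec (z (k + 1)) + σ • (v (k + 1) - v k)) ⬝ᵥ v (k + 1) = 0)
    (heq4 : ∀ k : ℕ, 0 ≤ v (k + 1))
    (heq5 : ∀ k : ℕ, 0 ≤ b - A.mulVec (z (k + 1)) + σ • (v (k + 1) - v k))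
    (δz : Fin n → ℝ) (δlam : Fin m → ℝ) (δv : Fin q → ℝ)
    (hd1 : Tendsto (fun k => z (k + 1) - z k) atTop (𝓝 δz))
    (hd2 : Tendsto (fun k => lam (k + 1) - lam k) atTop (𝓝 δlam))
    (hd3 : Tendsto (fun k => v (k + 1) - v k) atTop (𝓝 δv)) :
    δz ≠ 0 →
      (¬ ∃ (u : Fin n → ℝ) (lam' : Fin m → ℝ) (v' : Fin q → ℝ),
          H.mulVec u + f + Gᵀ.mulVec lam' + Aᵀ.mulVec v' = 0 ∧ 0 ≤ v') ∧
      H.mulVec δz = 0 ∧ A.mulVec δz ≤ 0 ∧ G.mulVec δz = 0 ∧ f ⬝ᵥ δz < 0 := by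
  intro hδz
  have hsymm : Hᵀ = H := isHermitian_iff_isSymm.1 hH.1
  have hG := mulVec_eq_zero_of_prox_multiplier_step heq2 hd1 hd2
  have hslack := tendsto_prox_slack_succ_sub (A := A) (b := b) (σ := σ) hd1 hd3
  have hA : A *ᵥ δz ≤ 0 := neg_nonneg.1 (pi_nonneg_of_tendsto_succ_sub heq5 hslack)
  have hAv : ∀ᶠ k in atTop, v (k + 1) ⬝ᵥ A *ᵥ δz = 0 :=
    (eventually_dotProduct_eq_zero_of_complementary heq5 heq4 heq3 hslack).mono fun k hk => by
      rwa [dotProduct_neg, neg_eq_zero] at hk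
  have hpair := eventually_prox_pairing_eq_zero hsymm heq1 hG hAv
  have hH0 : H *ᵥ δz = 0 := (hH.dotProduct_mulVec_zero_iff δz).1 <| by
    simpa using dotProduct_eq_zero_of_eventually_pairing_eq_zero hd1 hpair
  have hf := eq_neg_mul_dotProduct_self_of_eventually_pairing_eq_zero hd1 <|
    hpair.mono fun k hk => by rwa [hH0, dotProduct_zero, zero_add] at hk
  have hpos : 0 < δz ⬝ᵥ δz := by simpa using dotProduct_star_self_pos_iff.2 hδz
  have cert : IsDualInfeasibilityCertificate H f G A δz :=
    ⟨hH0, hA, hG, by rw [hf]; exact neg_neg_of_pos (mul_pos hσ hpos)⟩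
  exact ⟨cert.not_exists_dualResidual_eq_zero hsymm, cert⟩

/-- Infeasibility detection, dual case: if `δz ≠ 0` then the dual QP is
infeasible and `δz` is a certificate of dual infeasibility. -/
theorem prox_dual_infeasibility_detection (n m q : ℕ)
    (H : Matrix (Fin n) (Fin n) ℝ) (hH : H.PosSemidef)
    (f : Fin n → ℝ) (G : Matrix (Fin m) (Fin n) ℝ) (h : Fin m → ℝ)
    (A : Matrix (Fin q) (Fin n) ℝ) (b : Fin q → ℝ)
    (σ : ℝ) (hσ : 0 < σ)
    (z : ℕ → Fin n → ℝ) (lam : ℕ → Fin m → ℝ) (v : ℕ → Fin q → ℝ)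
    (heq1 : ∀ k : ℕ, H.mulVec (z (k + 1)) + f + Gᵀ.mulVec (lam (k + 1)) +
      Aᵀ.mulVec (v (k + 1)) + σ • (z (k + 1) - z k) = 0)
    (heq2 : ∀ k : ℕ, h - G.mulVec (z (k + 1)) + σ • (lam (k + 1) - lam k) = 0)
    (heq3 : ∀ k : ℕ, (b - A.mulVec (z (k + 1)) + σ • (v (k + 1) - v k)) ⬝ᵥ v (k + 1) = 0)
    (heq4 : ∀ k : ℕ, 0 ≤ v (k + 1))
    (heq5 : ∀ k : ℕ, 0 ≤ b - A.mulVec (z (k + 1)) + σ • (v (k + 1) - v k))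
    (δz : Fin n → ℝ) (δlam : Fin m → ℝ) (δv : Fin q → ℝ)
    (hd1 : Tendsto (fun k => z (k + 1) - z k) atTop (𝓝 δz))
    (hd2 : Tendsto (fun k => lam (k + 1) - lam k) atTop (𝓝 δlam))
    (hd3 : Tendsto (fun k => v (k + 1) - v k) atTop (𝓝 δv))
    (ha1 : Tendsto (fun k : ℕ => (1 / (k : ℝ)) • z k) atTop (𝓝 δz))
    (ha2 : Tendsto (fun k : ℕ => (1 / (k : ℝ)) • lam k) atTop (𝓝 δlam))
    (ha3 : Tendsto (fun k : ℕ => (1 / (k : ℝ)) • v k) atTop (𝓝 δv)) :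
    δz ≠ 0 →
      (¬ ∃ (u : Fin n → ℝ) (lam' : Fin m → ℝ) (v' : Fin q → ℝ),
          H.mulVec u + f + Gᵀ.mulVec lam' + Aᵀ.mulVec v' = 0 ∧ 0 ≤ v') ∧
      H.mulVec δz = 0 ∧ A.mulVec δz ≤ 0 ∧ G.mulVec δz = 0 ∧ f ⬝ᵥ δz < 0 :=
  prox_dual_infeasibility_detection_general n m q H hH f G h A b σ hσ z lam v heq1 heq2 heq3 heq4
    heq5 δz δlam δv hd1 hd2 hd3
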